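/- arXiv:2508.13089 — 4 statements merged into one kernel-verified Lean document; each statement's English description precedes it below -/
import Mathlib

section
/- Let R be a Boolean ring and Z a subset of R. An element a in R is a supremum of Z with respect to the order x ≤ y iff xy = x if and only if the annihilator of Z is the principal ideal generated by 1 - a. -/
/-!
An element `b` is an upper bound of `Z` exactly when `1 - b` annihilates `Z`. So `a` is the least
upper bound of `Z` iff `1 - a` annihilates `Z` and `a` kills every annihilator of `Z`. Since `a` is
idempotent, `b ↦ b * a` has kernel `Ideal.span {1 - a}`, and both conditions together say that
this kernel is the annihilator of `Z`.
-/

theorem IsIdempotentElem.mem_span_one_sub_iff {R : Type*} [CommRing R] {a : R}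
    (ha : IsIdempotentElem a) (b : R) : b ∈ Ideal.span {1 - a} ↔ b * a = 0 := by
  rw [← ha.ker_toSpanSingleton_eq_span, LinearMap.mem_ker, LinearMap.toSpanSingleton_apply,
    smul_eq_mul]

theorem IsIdempotentElem.isLeastUpperBound_iff_annihilator_eq {R : Type*} [CommRing R] {a : R}
    (ha : IsIdempotentElem a) (Z : Set R) :
    ((∀ z ∈ Z, z * a = z) ∧ ∀ b : R, (∀ z ∈ Z, z * b = z) → a * b = a) ↔
      ∀ b : R, (∀ z ∈ Z, b * z = 0) ↔ b * a = 0 := by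
  constructor
  · rintro ⟨hub, hlub⟩ b
    refine ⟨fun hb ↦ ?_, fun hba z hz ↦ ?_⟩
    · have hc : a * (1 - b) = a :=
        hlub (1 - b) fun z hz ↦ by linear_combination -hb z hz
      linear_combination -hc
    · calc b * z = b * (z * a) := by rw [hub z hz]
        _ = 0 := by linear_combination z * hba
  · intro h
    refine ⟨fun z hz ↦ ?_, fun b hb ↦ ?_⟩
    · have hz' : (1 - a) * z = 0 := (h (1 - a)).2 ha.one_sub_mul_self z hz
      linear_combination -hz'
    · have hb' : (1 - b) * a = 0 := (h (1 - b)).1 fun z hz ↦ by linear_combination -hb z hz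
      linear_combination -hb'

/-- In a Boolean ring, a is a supremum of a subset Z (for the order x ≤ y iff xy = x)
iff the annihilator of Z is the principal ideal generated by 1 - a. -/
theorem stmt_4 (R : Type*) [CommRing R] (hB : ∀ x : R, x * x = x) (Z : Set R) (a : R) :
    ((∀ z ∈ Z, z * a = z) ∧ ∀ b : R, (∀ z ∈ Z, z * b = z) → a * b = a) ↔
      (∀ b : R, (∀ z ∈ Z, b * z = 0) ↔ b ∈ Ideal.span {1 - a}) := by
  have ha : IsIdempotentElem a := hB a
  simp only [ha.mem_span_one_sub_iff]
  exact ha.isLeastUpperBound_iff_annihilator_eq Z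
end

section
/- Let R be a self-injective Boolean ring (R is injective as a module over itself). Then for every ideal I of R, the double annihilator ann(ann(I)) is a principal ideal. -/
/-!
Let `A = ann I`. Since `R` is reduced, `I ∩ A = 0`, so `(x, y) ↦ x + y` embeds `I × A` into `R`.
Self-injectivity extends the projection `I × A → I ⊆ R` to an endomorphism of `R`, i.e. to
multiplication by some `a` with `x a = x` on `I` and `y a = 0` on `A`. The second property gives
`a ∈ ann A`; conversely for `b ∈ ann A` we get `b - b a ∈ A`, hence `b - b a = b (b - b a) = 0`
by idempotence, so `b ∈ (a)`.
-/

lemma Ideal.disjoint_annihilator {R : Type*} [CommRing R] [IsReduced R] (I : Ideal R) :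
    Disjoint I I.annihilator := by
  refine Submodule.disjoint_def.mpr fun x hxI hxA => IsReduced.eq_zero x ⟨2, ?_⟩
  rw [pow_two]
  exact Submodule.mem_annihilator.mp hxA x hxI

lemma exists_mul_eq_self_and_mul_eq_zero_of_disjoint {R : Type*} [CommRing R]
    [Module.Injective R R] {I J : Ideal R} (hIJ : Disjoint I J) :
    ∃ a : R, (∀ x ∈ I, x * a = x) ∧ ∀ y ∈ J, y * a = 0 := by
  have hinj : Function.Injective (I.subtype.coprod J.subtype) := by
    rw [← LinearMap.ker_eq_bot, LinearMap.ker_coprod_of_disjoint_range _ _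
      (by simpa only [Submodule.range_subtype] using hIJ)]
    simp only [Submodule.ker_subtype, Submodule.prod_bot]
  obtain ⟨h, hh⟩ := Module.Injective.out _ hinj (I.subtype ∘ₗ LinearMap.fst R I J)
  have h_eq_mul : ∀ z, h z = z * h 1 := fun z => by
    simpa only [smul_eq_mul, mul_one] using h.map_smul z 1
  refine ⟨h 1, fun x hx => ?_, fun y hy => ?_⟩
  · have := hh (⟨x, hx⟩, 0)
    rw [h_eq_mul] at this
    simpa using this
  · have := hh (0, ⟨y, hy⟩)
    rw [h_eq_mul] at this
    simpa using this

lemma Ideal.annihilator_annihilator_eq_span_singleton {R : Type*} [CommRing R]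
    (hB : ∀ x : R, x * x = x) {I : Ideal R} {a : R} (haI : ∀ x ∈ I, x * a = x)
    (haA : ∀ y ∈ I.annihilator, y * a = 0) :
    I.annihilator.annihilator = Ideal.span {a} := by
  refine le_antisymm (fun b hb => ?_) ?_
  · have hbA : b - b * a ∈ I.annihilator := Submodule.mem_annihilator.mpr fun x hx => by
      rw [smul_eq_mul, sub_mul, mul_assoc, mul_comm a, haI x hx, sub_self]
    have hb0 : b * (b - b * a) = 0 := Submodule.mem_annihilator.mp hb _ hbA
    rw [mul_sub, ← mul_assoc, hB, sub_eq_zero] at hb0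
    exact Ideal.mem_span_singleton'.mpr ⟨b, hb0.symm⟩
  · rw [Ideal.span_le, Set.singleton_subset_iff, SetLike.mem_coe, Submodule.mem_annihilator]
    intro y hy
    rw [smul_eq_mul, mul_comm]
    exact haA y hy

/-- In a self-injective Boolean ring, the double annihilator of any ideal is principal. -/
theorem stmt_5 (R : Type*) [CommRing R] (hB : ∀ x : R, x * x = x)
    [Module.Injective R R] (I : Ideal R) :
    ∃ a : R, I.annihilator.annihilator = Ideal.span {a} := by
  have : IsReduced R := ⟨fun x hx => IsIdempotentElem.eq_zero_of_isNilpotent (hB x) hx⟩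
  obtain ⟨a, haI, haA⟩ := exists_mul_eq_self_and_mul_eq_zero_of_disjoint I.disjoint_annihilator
  exact ⟨a, Ideal.annihilator_annihilator_eq_span_singleton hB haI haA⟩
end

section
/- Let R be a Boolean ring such that R is a retract, as an R-module, of a product of copies of F_2 (each copy an R-module via a ring map R → F_2). Then R is injective as a module over itself. -/
/-!
Baer's criterion reduces the claim to extending maps `I → R` from ideals, and a retract of a
module satisfying Baer's criterion satisfies it too, so it suffices to treat `PiF2 f`, one
coordinate at a time. A map `g : I → F₂` semilinear over `φ : R → F₂` is `x ↦ φ x * c`: if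
`φ y₀ ≠ 0` for some `y₀ ∈ I`, then `φ y₀ * g x = g (y₀ x) = φ x * g y₀`; if `φ` vanishes on
`I`, then `g x = g (x * x) = φ x * g x = 0`, since `x = x * x` in a Boolean ring.
-/

/-- The product of copies of F_2 indexed by `ι`, regarded as an `R`-module via the
family of ring maps `f i : R →+* ZMod 2`. -/
def PiF2 {R : Type*} [CommRing R] {ι : Type*} (_f : ι → (R →+* ZMod 2)) : Type _ :=
  ι → ZMod 2

instance {R : Type*} [CommRing R] {ι : Type*} (f : ι → (R →+* ZMod 2)) :
    AddCommGroup (PiF2 f) :=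
  inferInstanceAs (AddCommGroup (ι → ZMod 2))

instance {R : Type*} [CommRing R] {ι : Type*} (f : ι → (R →+* ZMod 2)) :
    Module R (PiF2 f) :=
  Module.compHom (ι → ZMod 2) (Pi.ringHom f)

theorem Ideal.exists_map_eq_mul_of_map_smul {R K : Type*} [CommRing R] [Field K]
    (hB : ∀ x : R, x * x = x) (φ : R →+* K) {I : Ideal R} (g : I → K)
    (hg : ∀ (a : R) (x : I), g (a • x) = φ a * g x) :
    ∃ c : K, ∀ x : I, g x = φ x * c := by
  by_cases hφ : ∃ y₀ : I, φ y₀ ≠ 0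
  · obtain ⟨y₀, hy₀⟩ := hφ
    refine ⟨g y₀ / φ y₀, fun x => ?_⟩
    have hcomm : φ y₀ * g x = φ x * g y₀ := by
      rw [← hg, ← hg]
      exact congrArg g (Subtype.ext (mul_comm _ _))
    rw [mul_div_assoc', eq_div_iff hy₀, mul_comm, hcomm]
  · push Not at hφ
    refine ⟨0, fun x => ?_⟩
    have hxx : (x : R) • x = x := Subtype.ext (hB x)
    rw [mul_zero, ← hxx, hg, hφ, zero_mul]

theorem Module.Baer.of_retract {R M N : Type*} [Ring R] [AddCommGroup M] [Module R M]
    [AddCommGroup N] [Module R N] (s : M →ₗ[R] N) (r : N →ₗ[R] M)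
    (hrs : r.comp s = LinearMap.id) (hN : Module.Baer R N) : Module.Baer R M := by
  intro I g
  obtain ⟨g', hg'⟩ := hN I (s.comp g)
  refine ⟨r.comp g', fun x hx => ?_⟩
  rw [LinearMap.comp_apply, hg' x hx]
  exact LinearMap.congr_fun hrs (g ⟨x, hx⟩)

theorem PiF2.baer {R : Type*} [CommRing R] (hB : ∀ x : R, x * x = x) {ι : Type*}
    (f : ι → (R →+* ZMod 2)) : Module.Baer R (PiF2 f) := by
  intro I G
  choose c hc using fun i =>
    Ideal.exists_map_eq_mul_of_map_smul hB (f i) (fun x => G x i)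
      (fun a x => congrFun (G.map_smul a x) i)
  exact ⟨LinearMap.toSpanSingleton R (PiF2 f) (c : PiF2 f), fun x hx =>
    funext fun i => (hc i ⟨x, hx⟩).symm⟩

/-- A Boolean ring which is a retract, as a module over itself, of a product of
copies of F_2 (each an R-module via a ring map R → F_2) is self-injective. -/
theorem stmt_8 (R : Type*) [CommRing R] (hB : ∀ x : R, x * x = x)
    {ι : Type*} (f : ι → (R →+* ZMod 2))
    (h : ∃ (s : R →ₗ[R] PiF2 f) (r : PiF2 f →ₗ[R] R), r.comp s = LinearMap.id) :
    Module.Injective R R := by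
  obtain ⟨s, r, hrs⟩ := h
  exact (Module.Baer.of_retract s r hrs (PiF2.baer hB f)).injective
end

section
/- Let R be a complete Boolean ring (every nonempty subset has a supremum for the order x ≤ y iff xy = x). Then Spec R is extremally disconnected: the closure of every open subset of Spec R is open. (Concretely: if U = ∪_{a ∈ Λ} D(a) is a union of basic opens and c = sup Λ, then the closure of U equals D(c).) -/
/-!
Let `Λ` be the set of `a` with `D(a) ⊆ U` and `c = sup Λ`. Every point of `U` lies in some
`D(a) ⊆ D(c)`, and `D(c)` is clopen because `c` is idempotent, so `closure U ⊆ D(c)`.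
Conversely, if `D(b)` misses `U` then `ab = 0` for all `a ∈ Λ` (the ring is reduced), so
`c(1 - b)` is an upper bound of `Λ`, forcing `cb = 0`, i.e. `D(c) ∩ D(b) = ∅`.
Hence `closure U = D(c)` is open.
-/

lemma isReduced_of_forall_mul_self_eq {R : Type*} [CommRing R] (hB : ∀ x : R, x * x = x) :
    IsReduced R :=
  (isReduced_iff_pow_one_lt 2 one_lt_two).2 fun x hx => by rwa [sq, hB] at hx

/-- `hub` and `hlub` say that `c` is a least upper bound of `S` for the order
`x ≤ y ↔ x * y = x`. -/
lemma IsIdempotentElem.mul_eq_zero_of_isLUB {R : Type*} [CommRing R] {S : Set R} {b c : R}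
    (hc : IsIdempotentElem c) (hub : ∀ a ∈ S, a * c = a)
    (hlub : ∀ d, (∀ a ∈ S, a * d = a) → c * d = c) (hb : ∀ a ∈ S, a * b = 0) :
    c * b = 0 := by
  have hub' : ∀ a ∈ S, a * (c * (1 - b)) = a := fun a ha => by
    linear_combination (1 - b) * hub a ha - hb a ha
  linear_combination (1 - b) * hc.eq - hlub _ hub'

namespace PrimeSpectrum

variable {R : Type*} [CommRing R]

lemma subset_basicOpen_of_forall_mul_eq {U : Set (PrimeSpectrum R)} (hU : IsOpen U) {c : R}
    (hc : ∀ a : R, (basicOpen a : Set (PrimeSpectrum R)) ⊆ U → a * c = a) :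
    U ⊆ basicOpen c := by
  intro p hp
  obtain ⟨_, ⟨a, rfl⟩, hpa, haU⟩ :=
    isTopologicalBasis_basic_opens.exists_subset_of_mem_open hp hU
  rw [← hc a haU] at hpa
  exact basicOpen_mul_le_right a c hpa

lemma mul_eq_zero_of_disjoint_basicOpen [IsReduced R] {a b : R}
    (h : Disjoint (basicOpen a : Set (PrimeSpectrum R)) (basicOpen b)) : a * b = 0 := by
  rw [← isNilpotent_iff_eq_zero, ← basicOpen_eq_bot_iff, basicOpen_mul, ← SetLike.coe_set_eq]
  exact Set.disjoint_iff_inter_eq_empty.1 h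

theorem closure_eq_basicOpen_of_isLUB (hB : ∀ x : R, x * x = x) {U : Set (PrimeSpectrum R)}
    (hU : IsOpen U) {c : R}
    (hub : ∀ a : R, (basicOpen a : Set (PrimeSpectrum R)) ⊆ U → a * c = a)
    (hlub : ∀ d, (∀ a : R, (basicOpen a : Set (PrimeSpectrum R)) ⊆ U → a * d = a) →
      c * d = c) :
    closure U = basicOpen c := by
  have : IsReduced R := isReduced_of_forall_mul_self_eq hB
  refine subset_antisymm
    (closure_minimal (subset_basicOpen_of_forall_mul_eq hU hub)
      (isClopen_iff.2 ⟨c, hB c, rfl⟩).isClosed) fun p hpc => ?_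
  rw [isTopologicalBasis_basic_opens.mem_closure_iff]
  rintro _ ⟨b, rfl⟩ hpb
  by_contra hbU
  have hab : ∀ a : R, (basicOpen a : Set (PrimeSpectrum R)) ⊆ U → a * b = 0 := fun a haU =>
    mul_eq_zero_of_disjoint_basicOpen <| Set.disjoint_of_subset_left haU <|
      Set.disjoint_iff_inter_eq_empty.2 <| by
        rwa [Set.inter_comm, ← Set.not_nonempty_iff_eq_empty]
  have hcb : c * b = 0 := IsIdempotentElem.mul_eq_zero_of_isLUB
    (S := {a : R | (basicOpen a : Set (PrimeSpectrum R)) ⊆ U}) (hB c) hub hlub hab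
  have hpcb : p ∈ basicOpen (c * b) := by
    rw [basicOpen_mul]
    exact ⟨hpc, hpb⟩
  rw [hcb, basicOpen_zero] at hpcb
  exact hpcb

end PrimeSpectrum

/-- If R is a complete Boolean ring (every nonempty subset has a supremum for the
order x ≤ y iff xy = x), then Spec R is extremally disconnected. -/
theorem stmt_14 (R : Type*) [CommRing R] (hB : ∀ x : R, x * x = x)
    (hc : ∀ Z : Set R, Z.Nonempty → ∃ a : R, (∀ z ∈ Z, z * a = z) ∧
      ∀ b : R, (∀ z ∈ Z, z * b = z) → a * b = a) :
    ExtremallyDisconnected (PrimeSpectrum R) := by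
  refine ⟨fun U hU => ?_⟩
  obtain ⟨c, hub, hlub⟩ :=
    hc {a | (PrimeSpectrum.basicOpen a : Set (PrimeSpectrum R)) ⊆ U} ⟨0, by simp⟩
  rw [PrimeSpectrum.closure_eq_basicOpen_of_isLUB hB hU hub hlub]
  exact (PrimeSpectrum.basicOpen c).isOpen
end
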